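/- arXiv:1109.0787 — 6 statements merged into one kernel-verified Lean document; each statement's English description precedes it below -/
import Mathlib

section
/- Let (G,R) be a graph with roots, M a matroid on R with rank function r_M, and c an integer. Suppose (C1) holds (R_v is independent in M for each v∈V) and c ≥ r_M(R). Then the function f_{M,c}:2^E→ℤ defined by f_{M,c}(F)=c(|V(F)|−1)−(|R_F|−r_M(R_F)) is monotone (f_{M,c}(F)≤f_{M,c}(F') whenever F⊆F'⊆E) and submodular (f_{M,c}(X)+f_{M,c}(Y) ≥ f_{M,c}(X∪Y)+f_{M,c}(X∩Y) for all X,Y⊆E). -/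
/-!
Write `f_{M,c}(F) = c(|V(F)| - 1) - n(R_F)` with the nullity `n(S) = |S| - r_M(S)`. Nullity is
supermodular, and since (C1) makes the roots at a single vertex independent, adding them to any
set raises its nullity by at most `r_M(R) ≤ c`. Hence passing from `V(F)` to `V(F')`, resp. from
`V(X ∩ Y)` to `V(X) ∩ V(Y)`, costs at most `c` in nullity per new vertex, which the term
`c(|V(·)| - 1)` pays for.
-/

open Finset
open scoped Classical

/-- Vertex set `V(F)` of an edge subset `F`: vertices incident to an edge of `F`. -/
noncomputable def incVerts {V E : Type*} [Fintype V] (ends : E → Sym2 V) (F : Finset E) :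
    Finset V :=
  Finset.univ.filter (fun v => ∃ e ∈ F, v ∈ ends e)

/-- The multiset `R_v` of roots located at a vertex `v` (as a set of root indices). -/
noncomputable def rootsAt {V ι : Type*} [Fintype ι] (root : ι → V) (v : V) : Finset ι :=
  Finset.univ.filter (fun i => root i = v)

/-- The multiset `R_F` of roots located at vertices of `V(F)`. -/
noncomputable def rootsOf {V E ι : Type*} [Fintype V] [Fintype ι] (ends : E → Sym2 V)
    (root : ι → V) (F : Finset E) : Finset ι :=
  Finset.univ.filter (fun i => root i ∈ incVerts ends F)

/-- The multiset `R_X` of roots located at vertices of `X ⊆ V`. -/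
noncomputable def rootsIn {V ι : Type*} [Fintype ι] (root : ι → V) (X : Finset V) : Finset ι :=
  Finset.univ.filter (fun i => root i ∈ X)

/-- A matroid on a finite ground type `ι`, given by its rank function. -/
structure FinMatroid (ι : Type*) [Fintype ι] where
  rk : Finset ι → ℕ
  rk_le_card : ∀ X : Finset ι, rk X ≤ X.card
  rk_mono : ∀ ⦃X Y : Finset ι⦄, X ⊆ Y → rk X ≤ rk Y
  rk_submodular : ∀ X Y : Finset ι, rk (X ∪ Y) + rk (X ∩ Y) ≤ rk X + rk Y

/-- Independence in a matroid given by a rank function. -/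
def FinMatroid.Indep {ι : Type*} [Fintype ι] (M : FinMatroid ι) (X : Finset ι) : Prop :=
  M.rk X = X.card

/-- `X` is a base of the matroid with rank function `ρ`: independent and spanning. -/
def IsBaseOf {ι : Type*} [Fintype ι] (ρ : Finset ι → ℕ) (X : Finset ι) : Prop :=
  ρ X = X.card ∧ ρ X = ρ Finset.univ

/-- The closure (span) `sp(X)` of `X` in the matroid with rank function `ρ`. -/
noncomputable def spOf {ι : Type*} [Fintype ι] (ρ : Finset ι → ℕ) (X : Finset ι) : Finset ι :=
  Finset.univ.filter (fun y => ρ (insert y X) = ρ X)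

/-- Two vertices are adjacent via an edge of `F`. -/
def adjIn {V E : Type*} (ends : E → Sym2 V) (F : Finset E) (u v : V) : Prop :=
  ∃ e ∈ F, ends e = s(u, v)

/-- The edge set `F` is connected: all its incident vertices are mutually reachable in `F`. -/
def connIn {V E : Type*} [Fintype V] (ends : E → Sym2 V) (F : Finset E) : Prop :=
  ∀ u ∈ incVerts ends F, ∀ v ∈ incVerts ends F, Relation.ReflTransGen (adjIn ends F) u v

/-- `(T, r)` is a rooted tree: `T` is empty, or `T` is connected and acyclic with `r ∈ V(T)`.
(A connected edge set `T` is acyclic iff `|T| + 1 = |V(T)|`.) -/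
def IsRootedTree {V E : Type*} [Fintype V] (ends : E → Sym2 V) (T : Finset E) (r : V) : Prop :=
  T = ∅ ∨ (connIn ends T ∧ T.card + 1 = (incVerts ends T).card ∧ r ∈ incVerts ends T)

/-- The vertex set `V(T, r) = V(T) ∪ {r}` spanned by the rooted tree `(T, r)`. -/
noncomputable def treeVerts {V E : Type*} [Fintype V] (ends : E → Sym2 V) (T : Finset E)
    (r : V) : Finset V :=
  insert r (incVerts ends T)

/-- `T` is a spanning tree on the vertex set `X`. -/
def IsSpanningTreeOn {V E : Type*} [Fintype V] (ends : E → Sym2 V) (X : Finset V)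
    (T : Finset E) : Prop :=
  incVerts ends T ⊆ X ∧ (∀ u ∈ X, ∀ v ∈ X, Relation.ReflTransGen (adjIn ends T) u v) ∧
    T.card + 1 = X.card

/-- The family `T` is a basic rooted-tree decomposition of the subgraph with vertex set `Vs`,
edge set `Es` and roots indexed by `Rs`, with respect to the matroid (on `Rs`) whose rank
function is `ρ`: the `T i` are edge-disjoint rooted trees partitioning `Es`, and every vertex
of `Vs` is spanned by a family of rooted trees whose root multiset is a base. -/
def IsBasicDecompFam {V E ι : Type*} [Fintype V] [Fintype ι] (ends : E → Sym2 V) (root : ι → V)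
    (ρ : Finset ι → ℕ) (Vs : Finset V) (Rs : Finset ι) (Es : Finset E)
    (T : ι → Finset E) : Prop :=
  (∀ i ∈ Rs, T i ⊆ Es ∧ IsRootedTree ends (T i) (root i)) ∧
  (∀ i ∉ Rs, T i = ∅) ∧
  (∀ i j, i ≠ j → Disjoint (T i) (T j)) ∧
  (∀ e ∈ Es, ∃ i ∈ Rs, e ∈ T i) ∧
  (∀ v ∈ Vs, IsBaseOf ρ (Rs.filter (fun i => v ∈ treeVerts ends (T i) (root i))))

/-- `(G, R)` admits a basic rooted-tree decomposition. -/
def HasBasicDecomp {V E ι : Type*} [Fintype V] [Fintype ι] (ends : E → Sym2 V) (root : ι → V)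
    (ρ : Finset ι → ℕ) (Vs : Finset V) (Rs : Finset ι) (Es : Finset E) : Prop :=
  ∃ T : ι → Finset E, IsBasicDecompFam ends root ρ Vs Rs Es T

/-- Condition (C1): the root multiset at each vertex is independent. -/
def CondC1 {V ι : Type*} [Fintype ι] (root : ι → V) (ρ : Finset ι → ℕ) : Prop :=
  ∀ v : V, ρ (rootsAt root v) = (rootsAt root v).card

/-- Condition (C2): `|F| + |R_F| ≤ k|V(F)| - k + ρ(R_F)` for every nonempty `F ⊆ E`. -/
def CondC2 {V E ι : Type*} [Fintype V] [Fintype E] [Fintype ι] (ends : E → Sym2 V)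
    (root : ι → V) (ρ : Finset ι → ℕ) (k : ℕ) : Prop :=
  ∀ F : Finset E, F.Nonempty →
    F.card + (rootsOf ends root F).card + k ≤
      k * (incVerts ends F).card + ρ (rootsOf ends root F)

/-- Condition (C3): `|E| + |R| = k|V|`. -/
def CondC3 (V E ι : Type*) [Fintype V] [Fintype E] [Fintype ι] (k : ℕ) : Prop :=
  Fintype.card E + Fintype.card ι = k * Fintype.card V

/-- The function `f_{M,c}(F) = c(|V(F)| - 1) - (|R_F| - r_M(R_F))`, as an integer. -/
noncomputable def fcount {V E ι : Type*} [Fintype V] [Fintype E] [Fintype ι] (ends : E → Sym2 V)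
    (root : ι → V) (ρ : Finset ι → ℕ) (c : ℤ) (F : Finset E) : ℤ :=
  c * ((incVerts ends F).card - 1) -
    (((rootsOf ends root F).card : ℤ) - (ρ (rootsOf ends root F) : ℤ))

namespace FinMatroid

variable {ι : Type*} [Fintype ι] (M : FinMatroid ι)

def nullity (S : Finset ι) : ℤ :=
  S.card - M.rk S

theorem nullity_add_nullity_le_nullity_union_add_nullity_inter (A B : Finset ι) :
    M.nullity A + M.nullity B ≤ M.nullity (A ∪ B) + M.nullity (A ∩ B) := by
  have hcard := card_union_add_card_inter A B
  have hrk := M.rk_submodular A B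
  simp only [nullity]
  omega

theorem nullity_union_le_card_of_indep {I : Finset ι} (hI : M.Indep I) (S : Finset ι) :
    M.nullity (S ∪ I) ≤ S.card := by
  have hcard := card_union_le S I
  have hrk : M.rk I ≤ M.rk (S ∪ I) := M.rk_mono subset_union_right
  rw [Indep] at hI
  simp only [nullity]
  omega

theorem nullity_union_le_of_indep {I : Finset ι} (hI : M.Indep I) (S : Finset ι) :
    M.nullity (S ∪ I) ≤ M.nullity S + M.rk univ := by
  have hrk : M.rk S ≤ M.rk univ := M.rk_mono (subset_univ S)
  have hnull := M.nullity_union_le_card_of_indep hI S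
  simp only [nullity] at hnull ⊢
  omega

end FinMatroid

section IncVerts

variable {V E : Type*} [Fintype V] (ends : E → Sym2 V)

theorem incVerts_union (X Y : Finset E) :
    incVerts ends (X ∪ Y) = incVerts ends X ∪ incVerts ends Y := by
  ext v
  simp [incVerts, or_and_right, exists_or]

theorem incVerts_mono {X Y : Finset E} (h : X ⊆ Y) : incVerts ends X ⊆ incVerts ends Y := by
  intro v
  simp only [incVerts, mem_filter, mem_univ, true_and]
  exact fun ⟨e, he, hv⟩ => ⟨e, h he, hv⟩

end IncVerts

section Roots

variable {V ι : Type*} [Fintype ι]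

theorem rootsIn_union (root : ι → V) (X Y : Finset V) :
    rootsIn root (X ∪ Y) = rootsIn root X ∪ rootsIn root Y := by
  ext i
  simp [rootsIn]

theorem rootsIn_inter (root : ι → V) (X Y : Finset V) :
    rootsIn root (X ∩ Y) = rootsIn root X ∩ rootsIn root Y := by
  ext i
  simp [rootsIn]

theorem rootsIn_insert (root : ι → V) (v : V) (W : Finset V) :
    rootsIn root (insert v W) = rootsIn root W ∪ rootsAt root v := by
  ext i
  simp [rootsIn, rootsAt, or_comm]

variable {root : ι → V} {M : FinMatroid ι}

theorem nullity_union_rootsIn_le (hC1 : CondC1 root M.rk) (S : Finset ι) (W : Finset V) :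
    M.nullity (S ∪ rootsIn root W) ≤ M.nullity S + M.rk univ * W.card := by
  induction W using Finset.induction_on with
  | empty => simp [rootsIn]
  | insert v W hv ih =>
    have hstep := M.nullity_union_le_of_indep (hC1 v) (S ∪ rootsIn root W)
    rw [rootsIn_insert, ← union_assoc, card_insert_of_notMem hv]
    push_cast
    linarith

theorem nullity_rootsIn_le_of_subset (hC1 : CondC1 root M.rk) {U U' : Finset V}
    (h : U ⊆ U') :
    M.nullity (rootsIn root U') ≤
      M.nullity (rootsIn root U) + M.rk univ * ((U'.card : ℤ) - U.card) := by
  have hU' : U' = U ∪ (U' \ U) := (union_sdiff_of_subset h).symm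
  have hcard : ((U' \ U).card : ℤ) = U'.card - U.card := by
    rw [card_sdiff_of_subset h, Nat.cast_sub (card_le_card h)]
  have hnull := nullity_union_rootsIn_le hC1 (rootsIn root U) (U' \ U)
  rwa [← rootsIn_union, ← hU', hcard] at hnull

end Roots

theorem fcount_eq {V E ι : Type*} [Fintype V] [Fintype E] [Fintype ι] (ends : E → Sym2 V)
    (root : ι → V) (M : FinMatroid ι) (c : ℤ) (F : Finset E) :
    fcount ends root M.rk c F =
      c * ((incVerts ends F).card - 1) - M.nullity (rootsIn root (incVerts ends F)) := rfl

/-- **Lemma (monotonicity and submodularity of `f_{M,c}`).**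
Let `(G, R)` be a graph with roots, `M` a matroid on `R`, and `c` an integer.
If (C1) holds and `c ≥ r_M(R)`, then `f_{M,c}(F) = c(|V(F)| - 1) - (|R_F| - r_M(R_F))` is
monotone and submodular. -/
theorem fcount_monotone_submodular {V E ι : Type*} [Fintype V] [Fintype E] [Fintype ι]
    (ends : E → Sym2 V) (root : ι → V) (M : FinMatroid ι) (c : ℤ)
    (hC1 : CondC1 root M.rk) (hc : (M.rk Finset.univ : ℤ) ≤ c) :
    (∀ F F' : Finset E, F ⊆ F' →
        fcount ends root M.rk c F ≤ fcount ends root M.rk c F') ∧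
      (∀ X Y : Finset E,
        fcount ends root M.rk c (X ∪ Y) + fcount ends root M.rk c (X ∩ Y) ≤
          fcount ends root M.rk c X + fcount ends root M.rk c Y) := by
  have hscale {U U' : Finset V} (h : U ⊆ U') :
      (M.rk univ : ℤ) * ((U'.card : ℤ) - U.card) ≤ c * ((U'.card : ℤ) - U.card) :=
    mul_le_mul_of_nonneg_right hc (sub_nonneg.mpr (by exact_mod_cast card_le_card h))
  refine ⟨fun F F' hF => ?_, fun X Y => ?_⟩
  · have hV := incVerts_mono ends hF
    have hnull := nullity_rootsIn_le_of_subset hC1 hV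
    rw [fcount_eq, fcount_eq]
    linarith [hscale hV]
  · set VX := incVerts ends X
    set VY := incVerts ends Y
    have hV : incVerts ends (X ∩ Y) ⊆ VX ∩ VY :=
      subset_inter (incVerts_mono ends inter_subset_left) (incVerts_mono ends inter_subset_right)
    have hnull := nullity_rootsIn_le_of_subset hC1 hV
    have hsuper := M.nullity_add_nullity_le_nullity_union_add_nullity_inter
      (rootsIn root VX) (rootsIn root VY)
    have hcard : ((VX ∪ VY).card : ℤ) + (VX ∩ VY).card = VX.card + VY.card := by
      exact_mod_cast card_union_add_card_inter VX VY
    rw [← rootsIn_union, ← rootsIn_inter] at hsuper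
    simp only [fcount_eq, incVerts_union]
    linear_combination hsuper + hnull + hscale hV + c * hcard
end

section
/- Let (G,R) be a graph with roots such that G is disconnected, and let M be a matroid on R of rank k satisfying conditions (C1), (C2), (C3). Then for each connected component (G',R') of (G,R) (where G'=(V',E') is a connected component of G and R'=R_{E'} is the multiset of roots lying in V'), R' is a spanning set of M (i.e. r_M(R')=k), and (G',R') satisfies (C1), (C2), (C3) with respect to the restriction matroid M|R'. -/
open Finset
open scoped Classical

/-- The graph `G` (with edge map `ends`) is connected: any two vertices are mutually
reachable using edges of `G`. -/
def GraphConnected {V E : Type*} [Fintype E] (ends : E → Sym2 V) : Prop :=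
  ∀ u v : V, Relation.ReflTransGen (adjIn ends Finset.univ) u v

/-- `C` is the vertex set of a connected component of `G`: nonempty, closed under
reachability, and any two of its vertices are mutually reachable. -/
def IsConnComponent {V E : Type*} [Fintype V] [Fintype E] (ends : E → Sym2 V)
    (C : Finset V) : Prop :=
  C.Nonempty ∧
  (∀ u ∈ C, ∀ v : V, Relation.ReflTransGen (adjIn ends Finset.univ) u v → v ∈ C) ∧
  (∀ u ∈ C, ∀ v ∈ C, Relation.ReflTransGen (adjIn ends Finset.univ) u v)


/-!
Call `k = r_M(R)`. For every nonempty vertex set `X`, the edges inside `X` and the roots on `X`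
satisfy `|E(X)| + |R_X| + k ≤ k|X| + r_M(R_X)`: apply (C2) to `F = E(X)` and bound the roots on
the remaining vertices by `k` per vertex using (C1). A component `C` and its (nonempty)
complement split `V`, `E` and `R`, so adding the two inequalities and using (C3) gives
`2k ≤ r_M(R_C) + r_M(R_{V∖C})`. Both ranks are at most `k`, so both equal `k` and both
inequalities are tight.
-/

section

variable {V E ι : Type*} [Fintype ι]

-- `[Fintype V]` makes the decidability instance of the filter the one used in the main statement.
noncomputable def edgesIn [Fintype V] [Fintype E] (ends : E → Sym2 V) (X : Finset V) : Finset E :=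
  univ.filter (fun e => ∀ v ∈ ends e, v ∈ X)

lemma FinMatroid.rk_le_rk_univ (M : FinMatroid ι) (X : Finset ι) : M.rk X ≤ M.rk univ :=
  M.rk_mono (subset_univ X)

section Roots

variable (root : ι → V)

lemma rootsIn_mono : Monotone (rootsIn root) := fun _ _ h _ hi => by
  simp only [rootsIn, mem_filter, mem_univ, true_and] at hi ⊢
  exact h hi

lemma rootsIn_singleton (v : V) : rootsIn root {v} = rootsAt root v := by
  ext i
  simp [rootsIn, rootsAt]

lemma rootsIn_compl [Fintype V] (X : Finset V) : rootsIn root Xᶜ = (rootsIn root X)ᶜ := by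
  ext i
  simp [rootsIn]

lemma card_rootsIn_eq_sum (X : Finset V) :
    (rootsIn root X).card = ∑ v ∈ X, (rootsAt root v).card := by
  rw [card_eq_sum_card_fiberwise (f := root) (t := X) fun i hi => by simpa [rootsIn] using hi]
  refine sum_congr rfl fun v hv => congrArg card ?_
  ext i
  simp only [rootsIn, rootsAt, mem_filter, mem_univ, true_and, and_iff_right_iff_imp]
  exact fun h => h ▸ hv

lemma card_rootsIn_sdiff_add {X Y : Finset V} (h : Y ⊆ X) :
    (rootsIn root (X \ Y)).card + (rootsIn root Y).card = (rootsIn root X).card := by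
  simp only [card_rootsIn_eq_sum]
  exact sum_sdiff h

variable {root} {M : FinMatroid ι}

lemma card_rootsIn_le (hC1 : CondC1 root M.rk) (X : Finset V) :
    (rootsIn root X).card ≤ M.rk univ * X.card := by
  rw [card_rootsIn_eq_sum, mul_comm, ← smul_eq_mul, ← sum_const]
  exact sum_le_sum fun v _ => hC1 v ▸ M.rk_le_rk_univ _

lemma add_card_rootsIn_le_of_subset (hC1 : CondC1 root M.rk) {X Y : Finset V} (hYX : Y ⊆ X)
    {a b : ℕ} (h : a + (rootsIn root Y).card + M.rk univ ≤ M.rk univ * Y.card + b) :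
    a + (rootsIn root X).card + M.rk univ ≤ M.rk univ * X.card + b := by
  have hsdiff := card_rootsIn_le hC1 (X \ Y)
  have hsplit := card_rootsIn_sdiff_add root hYX
  have hmul : M.rk univ * X.card = M.rk univ * (X \ Y).card + M.rk univ * Y.card := by
    rw [← mul_add, card_sdiff_add_card_eq_card hYX]
  omega

end Roots

lemma incVerts_edgesIn_subset [Fintype V] [Fintype E] (ends : E → Sym2 V) (X : Finset V) :
    incVerts ends (edgesIn ends X) ⊆ X := by
  intro v hv
  simp only [incVerts, edgesIn, mem_filter, mem_univ, true_and] at hv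
  obtain ⟨e, he, hve⟩ := hv
  exact he v hve

lemma card_edgesIn_add_card_rootsIn_le [Fintype V] [Fintype E] {ends : E → Sym2 V}
    {root : ι → V} {M : FinMatroid ι} (hC1 : CondC1 root M.rk)
    (hC2 : CondC2 ends root M.rk (M.rk univ)) {X : Finset V} (hX : X.Nonempty) :
    (edgesIn ends X).card + (rootsIn root X).card + M.rk univ ≤
      M.rk univ * X.card + M.rk (rootsIn root X) := by
  rcases (edgesIn ends X).eq_empty_or_nonempty with hempty | hedge
  · obtain ⟨v, hv⟩ := hX
    refine add_card_rootsIn_le_of_subset hC1 (singleton_subset_iff.2 hv) ?_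
    have hmono : M.rk (rootsAt root v) ≤ M.rk (rootsIn root X) :=
      rootsIn_singleton root v ▸ M.rk_mono (rootsIn_mono root (singleton_subset_iff.2 hv))
    rw [hempty, rootsIn_singleton, ← hC1 v]
    simp only [card_empty, card_singleton]
    omega
  · have hsub := incVerts_edgesIn_subset ends X
    refine add_card_rootsIn_le_of_subset hC1 hsub ((hC2 _ hedge).trans ?_)
    exact Nat.add_le_add_left (M.rk_mono (rootsIn_mono root hsub)) _

namespace IsConnComponent

variable [Fintype V] [Fintype E] {ends : E → Sym2 V} {C : Finset V}

lemma mem_of_mem_ends (hC : IsConnComponent ends C) {e : E} {u v : V} (hu : u ∈ ends e)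
    (hv : v ∈ ends e) (huC : u ∈ C) : v ∈ C := by
  by_cases huv : u = v
  · exact huv ▸ huC
  · exact hC.2.1 u huC v (.single ⟨e, mem_univ e, (Sym2.mem_and_mem_iff huv).1 ⟨hu, hv⟩⟩)

lemma edgesIn_compl (hC : IsConnComponent ends C) :
    edgesIn ends Cᶜ = (edgesIn ends C)ᶜ := by
  ext e
  simp only [edgesIn, mem_compl, mem_filter, mem_univ, true_and]
  constructor
  · intro h hC'
    exact h _ (Sym2.out_fst_mem (ends e)) (hC' _ (Sym2.out_fst_mem (ends e)))
  · intro h v hv hvC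
    exact h fun u hu => hC.mem_of_mem_ends hv hu hvC

lemma compl_nonempty (hC : IsConnComponent ends C) (hdisc : ¬ GraphConnected ends) :
    Cᶜ.Nonempty := by
  rw [nonempty_iff_ne_empty, Ne, compl_eq_empty_iff]
  rintro rfl
  exact hdisc fun u v => hC.2.2 u (mem_univ u) v (mem_univ v)

end IsConnComponent

end

/-- **Lemma (connected components of a disconnected graph with roots).**
Let `(G, R)` be a disconnected graph with roots satisfying (C1), (C2), (C3) with respect to
a matroid `M` of rank `k`.  Then for each connected component `(G', R')` (with vertex set
`C`, edge set `E'` of the edges inside `C`, and roots `R' = R_{E'}` lying in `C`):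
`R'` is a spanning set of `M`, and `(G', R')` satisfies (C1), (C2), (C3) with respect to the
restriction `M|R'` (whose rank function on subsets of `R'` is that of `M`, and whose rank is
`r_M(R')`). -/
theorem connComponent_conditions {V E ι : Type*} [Fintype V] [Fintype E] [Fintype ι]
    (ends : E → Sym2 V) (root : ι → V) (M : FinMatroid ι) (k : ℕ)
    (hk : M.rk Finset.univ = k)
    (hdisc : ¬ GraphConnected ends)
    (hC1 : CondC1 root M.rk) (hC2 : CondC2 ends root M.rk k) (hC3 : CondC3 V E ι k)
    (C : Finset V) (hC : IsConnComponent ends C) :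
    -- the edge set and root multiset of the component
    ∀ E' : Finset E, E' = Finset.univ.filter (fun e => ∀ v ∈ ends e, v ∈ C) →
    ∀ Rs : Finset ι, Rs = rootsIn root C →
      -- `R'` is a spanning set of `M`
      M.rk Rs = k ∧
      -- (C1) for `(G', R')` with respect to `M|R'`
      (∀ v ∈ C, M.rk (rootsAt root v) = (rootsAt root v).card) ∧
      -- (C2) for `(G', R')` with respect to `M|R'`
      (∀ F ⊆ E', F.Nonempty →
        F.card + (rootsOf ends root F).card + M.rk Rs ≤
          M.rk Rs * (incVerts ends F).card + M.rk (rootsOf ends root F)) ∧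
      -- (C3) for `(G', R')` with respect to `M|R'`
      E'.card + Rs.card = M.rk Rs * C.card := by
  rintro E' rfl Rs rfl
  subst hk
  have hC_le := card_edgesIn_add_card_rootsIn_le hC1 hC2 hC.1
  have hCc_le := card_edgesIn_add_card_rootsIn_le hC1 hC2 (hC.compl_nonempty hdisc)
  have hedges := card_add_card_compl (edgesIn ends C)
  have hroots := card_add_card_compl (rootsIn root C)
  rw [← hC.edgesIn_compl] at hedges
  rw [← rootsIn_compl] at hroots
  have hsplit : Fintype.card E + Fintype.card ι = M.rk univ * C.card + M.rk univ * Cᶜ.card := by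
    rw [hC3, ← mul_add, card_add_card_compl]
  have hrkC := M.rk_le_rk_univ (rootsIn root C)
  have hrkCc := M.rk_le_rk_univ (rootsIn root Cᶜ)
  have hspan : M.rk (rootsIn root C) = M.rk univ := by omega
  refine ⟨hspan, fun v _ => hC1 v, fun F _ hF => hspan ▸ hC2 F hF, ?_⟩
  change (edgesIn ends C).card + _ = _
  rw [hspan]
  omega
end

section
/- Let (G,R) be a connected graph with roots with E≠∅, satisfying (C1), (C2), (C3) with respect to a matroid M on R of rank k. Then G has a good edge, i.e. an edge uv∈E with sp_M(R_u) ≠ sp_M(R_v). -/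
open Finset
open scoped Classical

/-! If no edge is good, the span of `R_v` is the same for all vertices by connectivity; as
every root lies in the span of the roots at its own vertex, that common span is everything.
By (C1) every vertex then carries exactly `k` roots, so `|R_E| = k|V(E)|`, and (C2) for
`F = E` leaves no room for a single edge. -/

lemma mem_spOf_of_mem {ι : Type*} [Fintype ι] (ρ : Finset ι → ℕ) {X : Finset ι} {i : ι}
    (hi : i ∈ X) : i ∈ spOf ρ X := by
  simp [spOf, Finset.insert_eq_self.mpr hi]

namespace FinMatroid

variable {ι : Type*} [Fintype ι] (M : FinMatroid ι)

lemma rk_union_eq_of_subset_spOf {X Y : Finset ι} (h : Y ⊆ spOf M.rk X) :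
    M.rk (X ∪ Y) = M.rk X := by
  induction Y using Finset.induction_on with
  | empty => simp
  | @insert a Y _ ih =>
    have hY : M.rk (X ∪ Y) = M.rk X := ih ((Finset.subset_insert a Y).trans h)
    have ha : M.rk (insert a X) = M.rk X := by
      simpa [spOf] using h (Finset.mem_insert_self a Y)
    have hsub := M.rk_submodular (X ∪ Y) (insert a X)
    have hunion : (X ∪ Y) ∪ insert a X = X ∪ insert a Y := by
      ext x; simp only [Finset.mem_union, Finset.mem_insert]; tauto
    have hinter : X ⊆ (X ∪ Y) ∩ insert a X := fun x hx => by simp [hx]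
    have hle := M.rk_mono hinter
    have hge := M.rk_mono (Finset.subset_union_left (s₁ := X) (s₂ := insert a Y))
    rw [hunion, hY, ha] at hsub
    omega

lemma rk_eq_rk_univ_of_spOf_eq_univ {X : Finset ι} (h : spOf M.rk X = Finset.univ) :
    M.rk X = M.rk Finset.univ := by
  rw [← M.rk_union_eq_of_subset_spOf h.ge, Finset.union_eq_right.mpr (Finset.subset_univ X)]

end FinMatroid

lemma GraphConnected.eq_of_forall_edge {V E β : Type*} [Fintype E] {ends : E → Sym2 V}
    (hconn : GraphConnected ends) {f : V → β}
    (hf : ∀ e u v, ends e = s(u, v) → f u = f v) (u v : V) : f u = f v := by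
  induction hconn u v with
  | refl => rfl
  | tail _ hadj ih =>
    obtain ⟨e, -, he⟩ := hadj
    exact ih.trans (hf e _ _ he)

lemma spOf_rootsAt_eq_univ {V ι : Type*} [Fintype ι] {root : ι → V} {ρ : Finset ι → ℕ}
    (h : ∀ u v, spOf ρ (rootsAt root u) = spOf ρ (rootsAt root v)) (v : V) :
    spOf ρ (rootsAt root v) = Finset.univ :=
  Finset.eq_univ_of_forall fun i =>
    h (root i) v ▸ mem_spOf_of_mem ρ (by simp [rootsAt])

lemma card_rootsOf_eq_sum {V E ι : Type*} [Fintype V] [Fintype ι] (ends : E → Sym2 V)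
    (root : ι → V) (F : Finset E) :
    (rootsOf ends root F).card = ∑ v ∈ incVerts ends F, (rootsAt root v).card := by
  rw [Finset.card_eq_sum_card_fiberwise (f := root) (t := incVerts ends F)
    (fun i hi => by simpa [rootsOf] using hi)]
  refine Finset.sum_congr rfl fun v hv => congrArg Finset.card ?_
  ext i
  simp only [rootsOf, rootsAt, Finset.mem_filter, Finset.mem_univ, true_and]
  exact ⟨fun h => h.2, fun h => ⟨h ▸ hv, h⟩⟩

lemma CondC2.exists_card_rootsAt_lt {V E ι : Type*} [Fintype V] [Fintype E] [Fintype ι]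
    {ends : E → Sym2 V} {root : ι → V} {M : FinMatroid ι} {k : ℕ}
    (hC2 : CondC2 ends root M.rk k) (hk : M.rk Finset.univ = k) {F : Finset E}
    (hF : F.Nonempty) : ∃ v ∈ incVerts ends F, (rootsAt root v).card < k := by
  by_contra! hge
  have hroots : k * (incVerts ends F).card ≤ (rootsOf ends root F).card := by
    rw [card_rootsOf_eq_sum, mul_comm, ← smul_eq_mul, ← Finset.sum_const]
    exact Finset.sum_le_sum hge
  have hrk : M.rk (rootsOf ends root F) ≤ k := hk ▸ M.rk_mono (Finset.subset_univ _)
  have := hC2 F hF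
  have := hF.card_pos
  omega

theorem exists_good_edge_general {V E ι : Type*} [Fintype V] [Fintype E] [Fintype ι]
    (ends : E → Sym2 V) (root : ι → V) (M : FinMatroid ι) (k : ℕ)
    (hk : M.rk Finset.univ = k)
    (hconn : GraphConnected ends)
    (hEne : Nonempty E)
    (hC1 : CondC1 root M.rk) (hC2 : CondC2 ends root M.rk k) :
    ∃ e : E, ∃ u v : V, ends e = s(u, v) ∧
      spOf M.rk (rootsAt root u) ≠ spOf M.rk (rootsAt root v) := by
  by_contra! hno
  have hsp : ∀ u v, spOf M.rk (rootsAt root u) = spOf M.rk (rootsAt root v) :=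
    hconn.eq_of_forall_edge hno
  obtain ⟨v, -, hv⟩ := hC2.exists_card_rootsAt_lt hk (Finset.univ_nonempty_iff.mpr hEne)
  have hrk : M.rk (rootsAt root v) = k :=
    hk ▸ M.rk_eq_rk_univ_of_spOf_eq_univ (spOf_rootsAt_eq_univ hsp v)
  have := hC1 v
  omega

/-- **Claim 3 (existence of a good edge).**
Let `(G, R)` be a connected graph with roots with `E ≠ ∅`, satisfying (C1), (C2), (C3)
with respect to a matroid `M` of rank `k`.  Then `G` has a good edge, i.e. an edge `uv ∈ E`
with `sp_M(R_u) ≠ sp_M(R_v)`. -/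
theorem exists_good_edge {V E ι : Type*} [Fintype V] [Fintype E] [Fintype ι]
    (ends : E → Sym2 V) (root : ι → V) (M : FinMatroid ι) (k : ℕ)
    (hk : M.rk Finset.univ = k)
    (hconn : GraphConnected ends)
    (hEne : Nonempty E)
    (hC1 : CondC1 root M.rk) (hC2 : CondC2 ends root M.rk k) (hC3 : CondC3 V E ι k) :
    ∃ e : E, ∃ u v : V, ends e = s(u, v) ∧
      spOf M.rk (rootsAt root u) ≠ spOf M.rk (rootsAt root v) :=
  exists_good_edge_general ends root M k hk hconn hEne hC1 hC2
end

section
/- Let (G,R) be a connected graph with roots satisfying (C1), (C2), (C3) with respect to a matroid M on R of rank k, and suppose every proper tight set of G is balanced (i.e. for every nonempty F⊆E with |F|=f_{M,k}(F) and V(F)≠V, every v∈V(F) satisfies sp_M(R_v)=sp_M(R_F)). Let uv∈E be an edge with sp_M(R_v) ⊄ sp_M(R_u), and let r_j∈R_v be such that R_u∪{r_j} is independent in M. Form a new root r as a copy of the vertex u, set R''=R∪{r}, let M'' be the matroid on R'' obtained from M by adding r as an element parallel to r_j (so that r_{M''}(X)=r_M(X∩R) if r∉X and r_{M''}(X)=r_M((X∩R)∪{r_j})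 if r∈X), and let G''=(V,E−uv). Then (G'',R'') satisfies (C1), (C2), (C3) with respect to M''. -/
open Finset
open scoped Classical

/-!
Deleting `uv` costs one edge and the new root `r` at `u` pays for it, so (C3) persists, and (C1)
at `u` is the independence of `R_u + r_j`. For (C2) only edge sets `F` with `u ∈ V(F)` change,
gaining the root `r` parallel to `r_j`. If also `v ∈ V(F)`, then `r_j ∈ R_F` and the new bound
is (C2) for `F + uv`. Otherwise `r` raises the rank of `R_F` unless `r_j ∈ sp(R_F)`; in that case
`F` is a proper set that is not balanced at `u` (as `r_j ∉ sp(R_u)`), hence not tight, and (C2)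
for `F` holds with the unit of slack that `r` needs.
-/

namespace Finset

lemma card_eq_card_toLeft_add_ite {α : Type*} (S : Finset (α ⊕ Unit)) :
    #S = #S.toLeft + if Sum.inr () ∈ S then 1 else 0 := by
  rw [← card_toLeft_add_card_toRight]
  congr 1
  split_ifs with h
  · exact card_eq_one.mpr ⟨(), by ext ⟨⟩; simpa using h⟩
  · exact card_eq_zero.mpr (by ext ⟨⟩; simpa using h)

end Finset

lemma mem_spOf {ι : Type*} [Fintype ι] {ρ : Finset ι → ℕ} {X : Finset ι} {y : ι} :
    y ∈ spOf ρ X ↔ ρ (insert y X) = ρ X := by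
  simp [spOf]

lemma FinMatroid.notMem_spOf_of_indep_insert {ι : Type*} [Fintype ι] {M : FinMatroid ι}
    {X : Finset ι} {j : ι} (hjX : j ∉ X) (hind : M.Indep (insert j X)) :
    j ∉ spOf M.rk X := by
  have hrk : M.rk (insert j X) = #X + 1 := by rw [← card_insert_of_notMem hjX]; exact hind
  rw [mem_spOf, hrk]
  have := M.rk_le_card X
  omega

section ExtendRoots

variable {V ι κ : Type*} [Fintype ι] [Fintype κ] (root : ι → V) (root' : κ → V)

@[simp]
lemma toLeft_rootsAt_sumElim (w : V) :
    (rootsAt (Sum.elim root root') w).toLeft = rootsAt root w := by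
  ext; simp [rootsAt]

@[simp]
lemma inr_mem_rootsAt_sumElim (w : V) (b : κ) :
    Sum.inr b ∈ rootsAt (Sum.elim root root') w ↔ root' b = w := by
  simp [rootsAt]

@[simp]
lemma toLeft_rootsOf_sumElim {E : Type*} [Fintype V] (ends : E → Sym2 V) (F : Finset E) :
    (rootsOf ends (Sum.elim root root') F).toLeft = rootsOf ends root F := by
  ext; simp [rootsOf]

@[simp]
lemma inr_mem_rootsOf_sumElim {E : Type*} [Fintype V] (ends : E → Sym2 V) (F : Finset E)
    (b : κ) :
    Sum.inr b ∈ rootsOf ends (Sum.elim root root') F ↔ root' b ∈ incVerts ends F := by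
  simp [rootsOf]

end ExtendRoots

lemma incVerts_insert_of_mem {V E : Type*} [Fintype V] {ends : E → Sym2 V} {F : Finset E}
    {e : E} {u v : V} (he : ends e = s(u, v)) (hu : u ∈ incVerts ends F)
    (hv : v ∈ incVerts ends F) :
    incVerts ends (insert e F) = incVerts ends F := by
  refine Subset.antisymm (fun w hw => ?_) (fun w hw => ?_)
  · obtain ⟨e', he', hwe'⟩ := (mem_filter.mp hw).2
    rcases mem_insert.mp he' with rfl | he'F
    · rw [he, Sym2.mem_iff] at hwe'
      rcases hwe' with rfl | rfl <;> assumption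
    · exact mem_filter.mpr ⟨mem_univ w, e', he'F, hwe'⟩
  · obtain ⟨e', he', hwe'⟩ := (mem_filter.mp hw).2
    exact mem_filter.mpr ⟨mem_univ w, e', mem_insert_of_mem he', hwe'⟩

section RootedGraph

variable {V E ι : Type*} [Fintype V] [Fintype E] [Fintype ι]
  {ends : E → Sym2 V} {root : ι → V}

def IsTight (ends : E → Sym2 V) (root : ι → V) (ρ : Finset ι → ℕ) (k : ℕ) (F : Finset E) :
    Prop :=
  (#F : ℤ) = fcount ends root ρ k F

def ProperTightSetsBalanced (ends : E → Sym2 V) (root : ι → V) (ρ : Finset ι → ℕ) (k : ℕ) :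
    Prop :=
  ∀ F : Finset E, F.Nonempty → IsTight ends root ρ k F → incVerts ends F ≠ univ →
    ∀ v ∈ incVerts ends F, spOf ρ (rootsAt root v) = spOf ρ (rootsOf ends root F)

lemma isTight_of_card_add_eq {ρ : Finset ι → ℕ} {k : ℕ} {F : Finset E}
    (h : #F + #(rootsOf ends root F) + k = k * #(incVerts ends F) + ρ (rootsOf ends root F)) :
    IsTight ends root ρ k F := by
  have hZ : ((#F + #(rootsOf ends root F) + k : ℕ) : ℤ) =
      (k * #(incVerts ends F) + ρ (rootsOf ends root F) : ℕ) := congrArg _ h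
  unfold IsTight fcount
  push_cast at hZ
  linear_combination hZ

variable {M : FinMatroid ι} {k : ℕ}

lemma card_add_lt_of_mem_spOf_rootsOf
    (hC2 : CondC2 ends root M.rk k)
    (hbal : ProperTightSetsBalanced ends root M.rk k)
    {F : Finset E} (hF : F.Nonempty) (hFV : incVerts ends F ≠ univ) {u : V}
    (hu : u ∈ incVerts ends F) {j : ι} (hjF : j ∈ spOf M.rk (rootsOf ends root F))
    (hju : j ∉ spOf M.rk (rootsAt root u)) :
    #F + #(rootsOf ends root F) + k < k * #(incVerts ends F) + M.rk (rootsOf ends root F) := by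
  refine lt_of_le_of_ne (hC2 F hF) fun htight => hju ?_
  rwa [hbal F hF (isTight_of_card_add_eq htight) hFV u hu]

lemma card_add_succ_le_rk_insert
    (hC2 : CondC2 ends root M.rk k)
    (hbal : ProperTightSetsBalanced ends root M.rk k)
    {e₀ : E} {u v : V} (he₀ : ends e₀ = s(u, v)) {j : ι} (hj : root j = v)
    (hju : j ∉ spOf M.rk (rootsAt root u))
    {F : Finset E} (he₀F : e₀ ∉ F) (hF : F.Nonempty) (hu : u ∈ incVerts ends F) :
    #F + (#(rootsOf ends root F) + 1) + k ≤
      k * #(incVerts ends F) + M.rk (insert j (rootsOf ends root F)) := by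
  by_cases hv : v ∈ incVerts ends F
  · have hjF : j ∈ rootsOf ends root F := mem_filter.mpr ⟨mem_univ j, hj ▸ hv⟩
    have hV := incVerts_insert_of_mem he₀ hu hv
    have hR : rootsOf ends root (insert e₀ F) = rootsOf ends root F := by
      unfold rootsOf; rw [hV]
    have h := hC2 (insert e₀ F) (insert_nonempty e₀ F)
    rw [hR, hV, card_insert_of_notMem he₀F] at h
    rwa [insert_eq_of_mem hjF, ← add_assoc, add_right_comm #F]
  have hFV : incVerts ends F ≠ univ := fun h => hv (h ▸ mem_univ v)
  have hmono := M.rk_mono (subset_insert j (rootsOf ends root F))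
  by_cases hjF : j ∈ spOf M.rk (rootsOf ends root F)
  · have h := card_add_lt_of_mem_spOf_rootsOf hC2 hbal hF hFV hu hjF hju
    rw [mem_spOf] at hjF
    omega
  · rw [mem_spOf] at hjF
    have h := hC2 F hF
    omega

end RootedGraph

theorem good_edge_split_conditions_general {V E ι : Type*} [Fintype V] [Fintype E] [Fintype ι]
    (ends : E → Sym2 V) (root : ι → V) (M : FinMatroid ι) (k : ℕ)
    (hC1 : CondC1 root M.rk) (hC2 : CondC2 ends root M.rk k) (hC3 : CondC3 V E ι k)
    (hbal : ∀ F : Finset E, F.Nonempty →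
      (F.card : ℤ) = fcount ends root M.rk (k : ℤ) F →
      incVerts ends F ≠ Finset.univ →
      ∀ v ∈ incVerts ends F,
        spOf M.rk (rootsAt root v) = spOf M.rk (rootsOf ends root F))
    (e₀ : E) (u v : V) (he₀ : ends e₀ = s(u, v))
    (hgood : ¬ spOf M.rk (rootsAt root v) ⊆ spOf M.rk (rootsAt root u))
    (j : ι) (hj : root j = v) (hindep : M.Indep (insert j (rootsAt root u)))
    -- the extended root map `root''` on `R'' = R ∪ {r}` (the new root `r` is a copy of `u`)
    (root'' : ι ⊕ Unit → V) (hroot'' : root'' = Sum.elim root (fun _ => u))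
    -- the rank function of `M''`: `r` is added parallel to `r_j`
    (ρ'' : Finset (ι ⊕ Unit) → ℕ)
    (hρ'' : ∀ X : Finset (ι ⊕ Unit),
      ρ'' X = if Sum.inr () ∈ X then M.rk (insert j X.toLeft) else M.rk X.toLeft) :
    -- (C1) for `(G'', R'')` with respect to `M''`
    (∀ w : V, ρ'' (rootsAt root'' w) = (rootsAt root'' w).card) ∧
    -- (C2) for `(G'', R'')` (edge set `E - e₀`) with respect to `M''`
    (∀ F : Finset E, e₀ ∉ F → F.Nonempty →
      F.card + (rootsOf ends root'' F).card + k ≤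
        k * (incVerts ends F).card + ρ'' (rootsOf ends root'' F)) ∧
    -- (C3) for `(G'', R'')` with respect to `M''`
    (Fintype.card E - 1) + Fintype.card (ι ⊕ Unit) = k * Fintype.card V := by
  subst hroot''
  have huv : u ≠ v := fun h => hgood (h ▸ subset_refl _)
  have hjRu : j ∉ rootsAt root u := fun h => huv ((mem_filter.mp h).2.symm.trans hj)
  have hrk : M.rk (insert j (rootsAt root u)) = #(rootsAt root u) + 1 := by
    rw [← card_insert_of_notMem hjRu]; exact hindep
  refine ⟨fun w => ?_, fun F he₀F hF => ?_, ?_⟩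
  · rw [hρ'', card_eq_card_toLeft_add_ite]
    simp only [toLeft_rootsAt_sumElim, inr_mem_rootsAt_sumElim]
    split_ifs with hw
    · exact hw ▸ hrk
    · exact hC1 w
  · rw [hρ'', card_eq_card_toLeft_add_ite]
    simp only [toLeft_rootsOf_sumElim, inr_mem_rootsOf_sumElim]
    split_ifs with hu
    · exact card_add_succ_le_rk_insert hC2 hbal he₀ hj
        (M.notMem_spOf_of_indep_insert hjRu hindep) he₀F hF hu
    · exact hC2 F hF
  · have hE : 0 < Fintype.card E := Fintype.card_pos_iff.mpr ⟨e₀⟩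
    rw [Fintype.card_sum, Fintype.card_unit]
    unfold CondC3 at hC3
    omega

/-- **Lemma (splitting off a good edge preserves the conditions).**
Let `(G, R)` be a connected graph with roots satisfying (C1), (C2), (C3) with respect to a
matroid `M` of rank `k`, in which every proper tight set is balanced.  Let `uv ∈ E` be an
edge with `sp_M(R_v) ⊄ sp_M(R_u)` and `r_j ∈ R_v` with `R_u ∪ {r_j}` independent.  Add a new
root `r` at the vertex `u` (ground set `ι ⊕ Unit`), let `M''` be obtained from `M` by adding
`r` parallel to `r_j`, and let `G'' = (V, E - uv)`.  Then `(G'', R'')` satisfies (C1), (C2),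
(C3) with respect to `M''`. -/
theorem good_edge_split_conditions {V E ι : Type*} [Fintype V] [Fintype E] [Fintype ι]
    (ends : E → Sym2 V) (root : ι → V) (M : FinMatroid ι) (k : ℕ)
    (hk : M.rk Finset.univ = k)
    (hconn : GraphConnected ends)
    (hC1 : CondC1 root M.rk) (hC2 : CondC2 ends root M.rk k) (hC3 : CondC3 V E ι k)
    (hbal : ∀ F : Finset E, F.Nonempty →
      (F.card : ℤ) = fcount ends root M.rk (k : ℤ) F →
      incVerts ends F ≠ Finset.univ →
      ∀ v ∈ incVerts ends F,
        spOf M.rk (rootsAt root v) = spOf M.rk (rootsOf ends root F))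
    (e₀ : E) (u v : V) (he₀ : ends e₀ = s(u, v))
    (hgood : ¬ spOf M.rk (rootsAt root v) ⊆ spOf M.rk (rootsAt root u))
    (j : ι) (hj : root j = v) (hindep : M.Indep (insert j (rootsAt root u)))
    -- the extended root map `root''` on `R'' = R ∪ {r}` (the new root `r` is a copy of `u`)
    (root'' : ι ⊕ Unit → V) (hroot'' : root'' = Sum.elim root (fun _ => u))
    -- the rank function of `M''`: `r` is added parallel to `r_j`
    (ρ'' : Finset (ι ⊕ Unit) → ℕ)
    (hρ'' : ∀ X : Finset (ι ⊕ Unit),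
      ρ'' X = if Sum.inr () ∈ X then M.rk (insert j X.toLeft) else M.rk X.toLeft) :
    -- (C1) for `(G'', R'')` with respect to `M''`
    (∀ w : V, ρ'' (rootsAt root'' w) = (rootsAt root'' w).card) ∧
    -- (C2) for `(G'', R'')` (edge set `E - e₀`) with respect to `M''`
    (∀ F : Finset E, e₀ ∉ F → F.Nonempty →
      F.card + (rootsOf ends root'' F).card + k ≤
        k * (incVerts ends F).card + ρ'' (rootsOf ends root'' F)) ∧
    -- (C3) for `(G'', R'')` with respect to `M''`
    (Fintype.card E - 1) + Fintype.card (ι ⊕ Unit) = k * Fintype.card V :=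
  good_edge_split_conditions_general ends root M k hC1 hC2 hC3 hbal e₀ u v he₀ hgood j hj hindep
    root'' hroot'' ρ'' hρ''
end

section
/- Let (G,p) be a 2-dimensional bar-joint framework with G=(V,E) a finite graph and p:V→ℝ² injective, and let (G,b) be the body-bar framework derived from it, with bar-configuration b_{uv}=(p(u),1)∧(p(v),1)∈⋀²ℝ³ for uv∈E. Then (G,p) is infinitesimally rigid as a bar-joint framework if and only if (G,b) is bar-joint-rigid, i.e. every infinitesimal motion of (G,b) is a linear combination of trivial motions and trivial danglings. -/
open Finset
open scoped Classical

/-- The Euclidean inner product on `ℝ²`. -/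
def dot2 (x y : Fin 2 → ℝ) : ℝ := x 0 * y 0 + x 1 * y 1

/-- The canonical affine lift `ℝ² → ℝ³`, `x ↦ (x, 1)`. -/
def lift2 (x : Fin 2 → ℝ) : Fin 3 → ℝ := ![x 0, x 1, 1]

/-- An infinitesimal motion of the 2-dimensional bar-joint framework `(G, p)`:
a map `m : V → ℝ²` with `⟨p(u) - p(w), m(u) - m(w)⟩ = 0` for every edge `uw`. -/
def IsBJMotion {V E : Type*} (ends : E → Sym2 V) (p : V → Fin 2 → ℝ)
    (m : V → Fin 2 → ℝ) : Prop :=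
  ∀ e : E, ∀ u w : V, ends e = s(u, w) → dot2 (p u - p w) (m u - m w) = 0

/-- A trivial motion of `(G, p)`: the restriction to the joints of an infinitesimal
isometry of `ℝ²`, i.e. `m(v) = S p(v) + t` with `S` skew-symmetric. -/
def IsTrivialBJMotion {V : Type*} (p : V → Fin 2 → ℝ) (m : V → Fin 2 → ℝ) : Prop :=
  ∃ S : Matrix (Fin 2) (Fin 2) ℝ, S.transpose = -S ∧
    ∃ t : Fin 2 → ℝ, ∀ v : V, m v = S.mulVec (p v) + t

/-- An infinitesimal motion of the body-bar framework `(G, b)` derived from `(G, p)`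
(with `b_{uw} = (p(u),1) ∧ (p(w),1)`): a map `m : V → ℝ³ = ⋀¹ℝ³` with
`(m(u) - m(w)) ∧ b_{uw} = 0` in `⋀³ℝ³` for every edge `uw`. -/
def IsDerivedBBMotion {V E : Type*} (ends : E → Sym2 V) (p : V → Fin 2 → ℝ)
    (m : V → Fin 3 → ℝ) : Prop :=
  ∀ e : E, ∀ u w : V, ends e = s(u, w) →
    ExteriorAlgebra.ι ℝ (m u - m w) *
      (ExteriorAlgebra.ι ℝ (lift2 (p u)) * ExteriorAlgebra.ι ℝ (lift2 (p w))) = 0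

/-!
A vector `a ∈ ℝ³` encodes the infinitesimal isometry `x ↦ J (a₀₁ - a₂ x)` of the plane, with `J`
the quarter turn. Evaluating `m v` at the joint `p v` turns `m : V → ℝ³` into a planar velocity
field `toBJMotion p m`, and every velocity field arises this way. For an edge `uw`, the wedge
`(m u - m w) ∧ (p u, 1) ∧ (p w, 1)` is the determinant of the three vectors, which is exactly the
bar-joint constraint of that velocity field on `uw`; since the lifts of distinct points are
independent, the wedge vanishes iff the determinant does. So body-bar motions correspond to
bar-joint motions. Constants give exactly the trivial bar-joint motions, and the dangling
`(p v, 1)` encodes `x ↦ J (p v - x)`, which vanishes at `p v`.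
-/

namespace ExteriorAlgebra

theorem ι_mul_ι_mul_ι_eq_zero_of_mem_span_pair {R M : Type*} [CommRing R]
    [AddCommGroup M] [Module R M] {a b c : M} (h : a ∈ Submodule.span R {b, c}) :
    ι R a * (ι R b * ι R c) = 0 := by
  obtain ⟨α, β, rfl⟩ := Submodule.mem_span_pair.mp h
  have hcb : ι R c * ι R b = -(ι R b * ι R c) := eq_neg_of_add_eq_zero_left (ι_add_mul_swap c b)
  rw [map_add, map_smul, map_smul, add_mul, smul_mul_assoc, smul_mul_assoc, ← mul_assoc,
    ι_sq_zero, ← mul_assoc, hcb, neg_mul, mul_assoc, ι_sq_zero]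
  simp

noncomputable def detForm {R : Type*} [CommRing R] : ∀ i : ℕ, (Fin 3 → R) [⋀^Fin i]→ₗ[R] R
  | 3 => Matrix.detRowAlternating
  | _ => 0

theorem liftAlternating_detForm_ι_mul_ι_mul_ι {R : Type*} [CommRing R] (a b c : Fin 3 → R) :
    liftAlternating detForm (ι R a * (ι R b * ι R c)) = (Matrix.of ![a, b, c]).det := by
  have h : ι R a * (ι R b * ι R c) = ιMulti R 3 ![a, b, c] := by simp [ιMulti_apply]
  rw [h, liftAlternating_apply_ιMulti]
  rfl

theorem ι_mul_ι_mul_ι_eq_zero_iff_det_eq_zero {K : Type*} [Field K] {a b c : Fin 3 → K}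
    (hbc : LinearIndependent K ![b, c]) :
    ι K a * (ι K b * ι K c) = 0 ↔ (Matrix.of ![a, b, c]).det = 0 := by
  refine ⟨fun h => by rw [← liftAlternating_detForm_ι_mul_ι_mul_ι, h, map_zero], fun h => ?_⟩
  apply ι_mul_ι_mul_ι_eq_zero_of_mem_span_pair
  by_contra ha
  have hrows : LinearIndependent K (Matrix.of ![a, b, c]).row :=
    linearIndependent_finCons.mpr ⟨hbc, by rwa [Matrix.range_cons_cons_empty]⟩
  exact (Matrix.isUnit_iff_isUnit_det _).mp (Matrix.linearIndependent_rows_iff_isUnit.mp hrows)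
    |>.ne_zero h

end ExteriorAlgebra

theorem lift2_injective : Function.Injective lift2 := fun x y h => by
  ext i
  fin_cases i
  · exact congrFun h 0
  · exact congrFun h 1

theorem linearIndependent_lift2 {x y : Fin 2 → ℝ} (hxy : x ≠ y) :
    LinearIndependent ℝ ![lift2 x, lift2 y] := by
  refine (LinearIndependent.pair_iff' fun h => by simpa [lift2] using congrFun h 2).mpr
    fun a ha => hxy (lift2_injective ?_)
  obtain rfl : a = 1 := by simpa [lift2] using congrFun ha 2
  rwa [one_smul] at ha

def planarVelocity (a : Fin 3 → ℝ) (x : Fin 2 → ℝ) : Fin 2 → ℝ :=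
  ![a 2 * x 1 - a 1, a 0 - a 2 * x 0]

theorem det_sub_lift2_lift2 (a a' : Fin 3 → ℝ) (x y : Fin 2 → ℝ) :
    (Matrix.of ![a - a', lift2 x, lift2 y]).det =
      dot2 (x - y) (planarVelocity a x - planarVelocity a' y) := by
  simp only [Matrix.det_fin_three, Matrix.of_apply, Matrix.cons_val, Pi.sub_apply, lift2, dot2,
    planarVelocity]
  ring

def toBJMotion {V : Type*} (p : V → Fin 2 → ℝ) (m : V → Fin 3 → ℝ) : V → Fin 2 → ℝ :=
  fun v => planarVelocity (m v) (p v)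

theorem toBJMotion_surjective {V : Type*} (p : V → Fin 2 → ℝ) :
    Function.Surjective (toBJMotion p) := fun m =>
  ⟨fun v => ![m v 1, -m v 0, 0], funext fun v => by
    ext i; fin_cases i <;> simp [toBJMotion, planarVelocity]⟩

theorem isDerivedBBMotion_iff_isBJMotion_toBJMotion {V E : Type*} (ends : E → Sym2 V)
    {p : V → Fin 2 → ℝ} (hp : Function.Injective p) (m : V → Fin 3 → ℝ) :
    IsDerivedBBMotion ends p m ↔ IsBJMotion ends p (toBJMotion p m) := by
  refine forall₃_congr fun e u w => imp_congr_right fun _ => ?_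
  rcases eq_or_ne u w with rfl | huw
  · simp [dot2]
  · have hlin := linearIndependent_lift2 (hp.ne huw)
    rw [ExteriorAlgebra.ι_mul_ι_mul_ι_eq_zero_iff_det_eq_zero hlin, det_sub_lift2_lift2]
    rfl

theorem Matrix.eq_of_transpose_eq_neg_fin_two {R : Type*} [CommRing R] [NoZeroDivisors R]
    [CharZero R] {S : Matrix (Fin 2) (Fin 2) R} (hS : S.transpose = -S) :
    S = !![0, S 0 1; -S 0 1, 0] := by
  have h i j : S j i = -S i j := congrFun (congrFun hS i) j
  calc S = !![S 0 0, S 0 1; S 1 0, S 1 1] := S.eta_fin_two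
    _ = _ := by
      rw [CharZero.eq_neg_self_iff.mp (h 0 0), CharZero.eq_neg_self_iff.mp (h 1 1), h 0 1]

theorem isTrivialBJMotion_iff {V : Type*} (p m : V → Fin 2 → ℝ) :
    IsTrivialBJMotion p m ↔
      ∃ (s : ℝ) (t : Fin 2 → ℝ), ∀ v, m v = ![s * p v 1, -(s * p v 0)] + t := by
  have hmulVec (s : ℝ) (x : Fin 2 → ℝ) :
      (!![0, s; -s, 0]).mulVec x = ![s * x 1, -(s * x 0)] := by
    ext i; fin_cases i <;> simp [Matrix.mulVec, dotProduct, Fin.sum_univ_two]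
  constructor
  · rintro ⟨S, hS, t, ht⟩
    rw [Matrix.eq_of_transpose_eq_neg_fin_two hS] at ht
    exact ⟨S 0 1, t, fun v => by rw [ht, hmulVec]⟩
  · rintro ⟨s, t, h⟩
    refine ⟨!![0, s; -s, 0], ?_, t, fun v => by rw [h, hmulVec]⟩
    ext i j
    fin_cases i <;> fin_cases j <;> simp

theorem isTrivialBJMotion_toBJMotion_iff {V : Type*} (p : V → Fin 2 → ℝ) (m : V → Fin 3 → ℝ) :
    IsTrivialBJMotion p (toBJMotion p m) ↔
      ∃ t : Fin 3 → ℝ, ∃ c : V → ℝ, ∀ v : V, m v = t + c v • lift2 (p v) := by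
  rw [isTrivialBJMotion_iff]
  constructor
  · rintro ⟨s, t, h⟩
    refine ⟨![t 1, -t 0, s], fun v => m v 2 - s, fun v => ?_⟩
    have h0 := congrFun (h v) 0
    have h1 := congrFun (h v) 1
    simp only [toBJMotion, planarVelocity, Matrix.cons_val, Pi.add_apply] at h0 h1
    ext i
    fin_cases i <;>
      simp only [Fin.zero_eta, Fin.mk_one, Fin.reduceFinMk, lift2, Matrix.cons_val, Pi.add_apply,
        Pi.smul_apply, smul_eq_mul] <;>
      linarith
  · rintro ⟨t, c, h⟩
    refine ⟨t 2, ![-t 1, t 0], fun v => ?_⟩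
    ext i
    fin_cases i <;>
      simp only [Fin.zero_eta, Fin.mk_one, toBJMotion, planarVelocity, h v, lift2, Matrix.cons_val,
        Pi.add_apply, Pi.smul_apply, smul_eq_mul] <;>
      ring

theorem bar_joint_rigid_iff_derived_body_bar_rigid_general {V E : Type*}
    (ends : E → Sym2 V) (p : V → Fin 2 → ℝ) (hp : Function.Injective p) :
    (∀ m : V → Fin 2 → ℝ, IsBJMotion ends p m → IsTrivialBJMotion p m) ↔
    (∀ m : V → Fin 3 → ℝ, IsDerivedBBMotion ends p m →
      ∃ t : Fin 3 → ℝ, ∃ c : V → ℝ, ∀ v : V, m v = t + c v • lift2 (p v)) := by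
  simp only [isDerivedBBMotion_iff_isBJMotion_toBJMotion ends hp,
    ← isTrivialBJMotion_toBJMotion_iff]
  exact (toBJMotion_surjective p).forall

/-- **Proposition 1 (bar-joint rigidity via derived body-bar frameworks).**
A 2-dimensional bar-joint framework `(G, p)` is infinitesimally rigid (every motion is
trivial) if and only if the derived body-bar framework `(G, b)` is bar-joint-rigid:
every infinitesimal motion of `(G, b)` is a linear combination of trivial motions
(constants) and trivial danglings (`v ↦ c_v • (p(v), 1)`). -/
theorem bar_joint_rigid_iff_derived_body_bar_rigid {V E : Type*} [Fintype V] [Fintype E]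
    (ends : E → Sym2 V) (p : V → Fin 2 → ℝ) (hp : Function.Injective p) :
    (∀ m : V → Fin 2 → ℝ, IsBJMotion ends p m → IsTrivialBJMotion p m) ↔
    (∀ m : V → Fin 3 → ℝ, IsDerivedBBMotion ends p m →
      ∃ t : Fin 3 → ℝ, ∃ c : V → ℝ, ∀ v : V, m v = t + c v • lift2 (p v)) :=
  bar_joint_rigid_iff_derived_body_bar_rigid_general ends p hp
end

section
/- Let G=(V,E) be a finite graph with a finite multiset R of vertices satisfying conditions (C1) and (C3) with respect to a matroid M on R of rank k, let G*=(V,E∪L) be the graph obtained by adding, for each r∈R, a self-loop (an element of L in bijection with R) at the vertex r, and regard M as a matroid on L. Define g_{k,0}(F)=k|V(F)|+r_M(F∩L) for F⊆E∪L. Let H_0=(V_0^+,V_0^−;A_0) be the bipartite graph with V_0^+=E∪L, V_0^−=(V¹∪…∪V^k)∪L' where V¹,…,V^k are k disjoint copies of V and L' is a copy of L, and A_0 consisting of the pairs (e,e') with e∈L and e'∈L' its copy, together with all pairs (e,v^i) such that v^i∈V^i is the i-th copy of a vertex v∈V incident to e∈E∪L in G*. Equip V_0^− with the matroid N^− that is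 the direct sum of M on L' and the free matroid on V¹∪…∪V^k, and V_0^+ with the free matroid. Then |F| ≤ g_{k,0}(F) holds for every F⊆E∪L if and only if H_0 has an independent matching covering V_0^+. -/
/-!
The theorem is an instance of Rado's theorem: a family `N : A → Finset B` has an injective
transversal that is independent in a matroid `ρ` on `B` iff `|S| ≤ r_ρ(N(S))` for all `S ⊆ A`.
In `H₀`, the neighbourhood `N(F)` of `F ⊆ E ∪ L` consists of the `k` copies of every vertex of
`V(F)` and the copy in `L'` of `F ∩ L`, so `r_{N⁻}(N(F)) = k|V(F)| + r_M(F ∩ L) = g_{k,0}(F)`.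
Rado's theorem is proved by Rado's reduction: if some `N a` has two elements `y₁ ≠ y₂`,
submodularity of the rank shows that one of them can be deleted from `N a` keeping Rado's
condition; once every `N a` is a singleton, the condition for `S = A` says that the transversal
is injective and independent.
-/

open Finset
open scoped Classical

/-- Incidence of a vertex `v` with an element of `E ∪ L` in the graph `G*` obtained by
adding a self-loop at the vertex of each root. -/
def incStar {V E ι : Type*} (ends : E → Sym2 V) (root : ι → V) (v : V) : E ⊕ ι → Prop
  | Sum.inl e => v ∈ ends e
  | Sum.inr r => root r = v

/-- The vertex set `V(F)` of a subset `F ⊆ E ∪ L` in `G*`. -/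
noncomputable def incVertsStar {V E ι : Type*} [Fintype V] (ends : E → Sym2 V)
    (root : ι → V) (F : Finset (E ⊕ ι)) : Finset V :=
  Finset.univ.filter (fun v => ∃ x ∈ F, incStar ends root v x)

/-- The loop part `F ∩ L` of a subset `F ⊆ E ∪ L`. -/
noncomputable def loopPart {E ι : Type*} [Fintype ι] (F : Finset (E ⊕ ι)) : Finset ι :=
  Finset.univ.filter (fun r => Sum.inr r ∈ F)

/-- The adjacency of the auxiliary bipartite graph `H₀ = (V₀⁺, V₀⁻; A₀)`:
`V₀⁺ = E ∪ L`, `V₀⁻ = (V¹ ∪ ⋯ ∪ Vᵏ) ∪ L'`; each `e ∈ L` is joined to its copy `e' ∈ L'`,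
and each `e ∈ E ∪ L` is joined to every copy `vⁱ` of every vertex `v` incident to `e`
in `G*`. -/
def adjH0 {V E ι : Type*} (ends : E → Sym2 V) (root : ι → V) (k : ℕ) :
    E ⊕ ι → (Fin k × V) ⊕ ι → Prop
  | x, Sum.inl (_, v) => incStar ends root v x
  | Sum.inr r, Sum.inr r' => r' = r
  | Sum.inl _, Sum.inr _ => False

section UpdateErase

open Function

variable {A B : Type*} {N : A → Finset B} {a : A}

lemma update_erase_subset (N : A → Finset B) (a : A) (y : B) (b : A) :
    update N a ((N a).erase y) b ⊆ N b := by
  rcases eq_or_ne b a with rfl | hb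
  · simpa using erase_subset y (N b)
  · simp [update_of_ne hb]

lemma biUnion_union_subset_update_erase {S₁ S₂ : Finset A} (ha₁ : a ∈ S₁) (ha₂ : a ∈ S₂)
    {y₁ y₂ : B} (hne : y₁ ≠ y₂) :
    (S₁ ∪ S₂).biUnion N ⊆
      S₁.biUnion (update N a ((N a).erase y₁)) ∪ S₂.biUnion (update N a ((N a).erase y₂)) := by
  intro z hz
  obtain ⟨b, hb, hzb⟩ := mem_biUnion.mp hz
  simp only [mem_union, mem_biUnion]
  rcases eq_or_ne b a with rfl | hba
  · by_cases hz₁ : z = y₁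
    · exact .inr ⟨b, ha₂, by simpa [hz₁, hne] using hz₁ ▸ hzb⟩
    · exact .inl ⟨b, ha₁, by simpa [hz₁] using hzb⟩
  · rcases mem_union.mp hb with hb | hb
    · exact .inl ⟨b, hb, by simpa [update_of_ne hba] using hzb⟩
    · exact .inr ⟨b, hb, by simpa [update_of_ne hba] using hzb⟩

lemma biUnion_erase_inter_subset_update (S₁ S₂ : Finset A) (X₁ X₂ : Finset B) :
    ((S₁ ∩ S₂).erase a).biUnion N ⊆
      S₁.biUnion (update N a X₁) ∩ S₂.biUnion (update N a X₂) := by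
  intro z hz
  obtain ⟨b, hb, hzb⟩ := mem_biUnion.mp hz
  obtain ⟨hba, hb₁, hb₂⟩ : b ≠ a ∧ b ∈ S₁ ∧ b ∈ S₂ := by simpa using hb
  exact mem_inter.mpr ⟨mem_biUnion.mpr ⟨b, hb₁, by rwa [update_of_ne hba]⟩,
    mem_biUnion.mpr ⟨b, hb₂, by rwa [update_of_ne hba]⟩⟩

lemma sum_card_update_erase_lt [Fintype A] {y : B} (hy : y ∈ N a) :
    ∑ b, (update N a ((N a).erase y) b).card < ∑ b, (N b).card :=
  sum_lt_sum (fun b _ => card_le_card (update_erase_subset N a y b))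
    ⟨a, mem_univ a, by simpa using card_erase_lt_of_mem hy⟩

end UpdateErase

namespace FinMatroid

section Basic

variable {ι : Type*} [Fintype ι]

lemma rk_le_rk_add_card_sdiff (M : FinMatroid ι) {X Y : Finset ι} (h : Y ⊆ X) :
    M.rk X ≤ M.rk Y + (X \ Y).card := by
  have hsub := M.rk_submodular Y (X \ Y)
  rw [union_sdiff_of_subset h, inter_sdiff_self] at hsub
  have := M.rk_le_card (X \ Y)
  omega

lemma Indep.subset {M : FinMatroid ι} {X Y : Finset ι} (hX : M.Indep X) (h : Y ⊆ X) :
    M.Indep Y := by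
  have := M.rk_le_rk_add_card_sdiff h
  have := card_sdiff_add_card_eq_card h
  have := M.rk_le_card Y
  unfold Indep at *
  omega

noncomputable def freeSum (α : Type*) [Fintype α] (M : FinMatroid ι) : FinMatroid (α ⊕ ι) where
  rk X := X.toLeft.card + M.rk X.toRight
  rk_le_card X := by
    have := M.rk_le_card X.toRight
    have := card_toLeft_add_card_toRight (u := X)
    omega
  rk_mono _ _ h :=
    add_le_add (card_le_card (toLeft_subset_toLeft h)) (M.rk_mono (toRight_subset_toRight h))
  rk_submodular X Y := by
    -- the instance in which the field `rk_submodular` is stated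
    let : DecidableEq (α ⊕ ι) := Classical.decEq _
    have hl : (X ∪ Y).toLeft = X.toLeft ∪ Y.toLeft := by ext; simp
    have hl' : (X ∩ Y).toLeft = X.toLeft ∩ Y.toLeft := by ext; simp
    have hr : (X ∪ Y).toRight = X.toRight ∪ Y.toRight := by ext; simp
    have hr' : (X ∩ Y).toRight = X.toRight ∩ Y.toRight := by ext; simp
    rw [hl, hl', hr, hr']
    have := card_union_add_card_inter X.toLeft Y.toLeft
    have := M.rk_submodular X.toRight Y.toRight
    omega

lemma freeSum_rk {α : Type*} [Fintype α] (M : FinMatroid ι) (X : Finset (α ⊕ ι)) :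
    (M.freeSum α).rk X = X.toLeft.card + M.rk X.toRight := rfl

lemma freeSum_indep_iff {α : Type*} [Fintype α] (M : FinMatroid ι) {X : Finset (α ⊕ ι)} :
    (M.freeSum α).Indep X ↔ M.Indep X.toRight := by
  have := card_toLeft_add_card_toRight (u := X)
  unfold Indep
  rw [freeSum_rk]
  omega

end Basic

section Rado

variable {A B : Type*} [Fintype B] {ρ : FinMatroid B}

variable (ρ) in
def RadoCondition (N : A → Finset B) : Prop :=
  ∀ S : Finset A, S.card ≤ ρ.rk (S.biUnion N)

section Reduction

open Function

variable {N : A → Finset B} {a : A}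

lemma RadoCondition.mem_of_rk_lt (h : RadoCondition ρ N) {X : Finset B} {S : Finset A}
    (hS : ρ.rk (S.biUnion (update N a X)) < S.card) : a ∈ S := by
  by_contra haS
  have hN : S.biUnion (update N a X) = S.biUnion N :=
    biUnion_congr rfl fun b hb => update_of_ne (ne_of_mem_of_not_mem hb haS) _ _
  exact (h S).not_gt (hN ▸ hS)

lemma RadoCondition.update_erase_or (h : RadoCondition ρ N) {y₁ y₂ : B} (hne : y₁ ≠ y₂) :
    RadoCondition ρ (update N a ((N a).erase y₁)) ∨
      RadoCondition ρ (update N a ((N a).erase y₂)) := by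
  by_contra hcon
  simp only [RadoCondition, not_or, not_forall, not_le] at hcon
  obtain ⟨⟨S₁, hS₁⟩, ⟨S₂, hS₂⟩⟩ := hcon
  have ha₁ := h.mem_of_rk_lt hS₁
  have ha₂ := h.mem_of_rk_lt hS₂
  have hunion := ρ.rk_mono (biUnion_union_subset_update_erase (N := N) ha₁ ha₂ hne)
  have hinter := ρ.rk_mono (biUnion_erase_inter_subset_update (N := N) (a := a) S₁ S₂
    ((N a).erase y₁) ((N a).erase y₂))
  have hsub := ρ.rk_submodular (S₁.biUnion (update N a ((N a).erase y₁)))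
    (S₂.biUnion (update N a ((N a).erase y₂)))
  have := h (S₁ ∪ S₂)
  have := h ((S₁ ∩ S₂).erase a)
  have := card_union_add_card_inter S₁ S₂
  have := card_erase_add_one (mem_inter.mpr ⟨ha₁, ha₂⟩)
  omega

end Reduction

variable [Fintype A]

variable (ρ) in
def IsIndepTransversal (N : A → Finset B) (f : A → B) : Prop :=
  Function.Injective f ∧ (∀ a, f a ∈ N a) ∧ ρ.Indep (univ.image f)

lemma IsIndepTransversal.mono {N N' : A → Finset B} {f : A → B}
    (hf : IsIndepTransversal ρ N' f) (h : ∀ a, N' a ⊆ N a) : IsIndepTransversal ρ N f :=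
  ⟨hf.1, fun a => h a (hf.2.1 a), hf.2.2⟩

lemma IsIndepTransversal.radoCondition {N : A → Finset B} {f : A → B}
    (hf : IsIndepTransversal ρ N f) : RadoCondition ρ N := by
  intro S
  obtain ⟨hinj, hmem, hind⟩ := hf
  have hS : ρ.Indep (S.image f) := hind.subset (image_subset_image (subset_univ S))
  calc S.card = (S.image f).card := (card_image_of_injective S hinj).symm
    _ = ρ.rk (S.image f) := hS.symm
    _ ≤ ρ.rk (S.biUnion N) :=
      ρ.rk_mono (image_subset_iff.mpr fun a ha => mem_biUnion.mpr ⟨a, ha, hmem a⟩)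

lemma RadoCondition.exists_of_card_le_one {N : A → Finset B} (h : RadoCondition ρ N)
    (hN : ∀ a, (N a).card ≤ 1) : ∃ f, IsIndepTransversal ρ N f := by
  have hsingle : ∀ a, ∃ y, N a = {y} := fun a => by
    have := h {a}
    rw [singleton_biUnion, card_singleton] at this
    exact card_eq_one.mp (le_antisymm (hN a) (this.trans (ρ.rk_le_card _)))
  choose f hf using hsingle
  have hbi : univ.biUnion N = univ.image f := by
    ext y; simp [hf, eq_comm]
  -- Rado's condition on `univ` forces `|A| ≤ r(f(A)) ≤ |f(A)| ≤ |A|`.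
  have hA := h univ
  rw [hbi] at hA
  have hrk := ρ.rk_le_card (univ.image f)
  have himg := card_image_le (s := (univ : Finset A)) (f := f)
  refine ⟨f, ?_, fun a => by simp [hf a], ?_⟩
  · have hinj : Set.InjOn f (univ : Finset A) := card_image_iff.mp (by omega)
    simpa using hinj
  · unfold Indep; omega

theorem RadoCondition.exists_isIndepTransversal {N : A → Finset B} (h : RadoCondition ρ N) :
    ∃ f, IsIndepTransversal ρ N f := by
  induction hn : ∑ a, (N a).card using Nat.strong_induction_on generalizing N with
  | _ n ih =>
  by_cases hbig : ∃ a, 1 < (N a).card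
  · obtain ⟨a, ha⟩ := hbig
    obtain ⟨y₁, hy₁, y₂, hy₂, hne⟩ := one_lt_card.mp ha
    have reduce : ∀ y ∈ N a, RadoCondition ρ (Function.update N a ((N a).erase y)) →
        ∃ f, IsIndepTransversal ρ N f := fun y hy hy' =>
      (ih _ (hn ▸ sum_card_update_erase_lt hy) hy' rfl).imp
        fun _ hf => hf.mono (update_erase_subset N a y)
    exact (h.update_erase_or hne).elim (reduce y₁ hy₁) (reduce y₂ hy₂)
  · simp only [not_exists, not_lt] at hbig
    exact h.exists_of_card_le_one hbig

theorem radoCondition_iff_exists_isIndepTransversal {N : A → Finset B} :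
    RadoCondition ρ N ↔ ∃ f, IsIndepTransversal ρ N f :=
  ⟨RadoCondition.exists_isIndepTransversal, fun ⟨_, hf⟩ => hf.radoCondition⟩

end Rado

end FinMatroid

section H0

variable {V E ι : Type*} [Fintype V] [Fintype ι] (ends : E → Sym2 V) (root : ι → V) (k : ℕ)

noncomputable def nbhdH0 (x : E ⊕ ι) : Finset ((Fin k × V) ⊕ ι) :=
  univ.filter (adjH0 ends root k x)

variable {ends root k}

lemma mem_nbhdH0 {x : E ⊕ ι} {z : (Fin k × V) ⊕ ι} :
    z ∈ nbhdH0 ends root k x ↔ adjH0 ends root k x z := by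
  simp [nbhdH0]

variable [DecidableEq ((Fin k × V) ⊕ ι)]

lemma toLeft_biUnion_nbhdH0 (F : Finset (E ⊕ ι)) :
    (F.biUnion (nbhdH0 ends root k)).toLeft = univ ×ˢ incVertsStar ends root F := by
  ext ⟨i, v⟩
  simp only [mem_toLeft, mem_biUnion, mem_nbhdH0, mem_product, mem_univ, true_and, incVertsStar,
    mem_filter]
  rfl

lemma toRight_biUnion_nbhdH0 (F : Finset (E ⊕ ι)) :
    (F.biUnion (nbhdH0 ends root k)).toRight = loopPart F := by
  ext r
  simp only [mem_toRight, mem_biUnion, mem_nbhdH0, loopPart, mem_filter, mem_univ, true_and]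
  constructor
  · rintro ⟨(e | r'), hx, hadj⟩
    · exact hadj.elim
    · exact (show r = r' from hadj) ▸ hx
  · exact fun hr => ⟨.inr r, hr, rfl⟩

lemma freeSum_rk_biUnion_nbhdH0 (M : FinMatroid ι) (F : Finset (E ⊕ ι)) :
    (M.freeSum (Fin k × V)).rk (F.biUnion (nbhdH0 ends root k)) =
      k * (incVertsStar ends root F).card + M.rk (loopPart F) := by
  rw [FinMatroid.freeSum_rk, toLeft_biUnion_nbhdH0, toRight_biUnion_nbhdH0, card_product,
    card_univ, Fintype.card_fin]

end H0

/-- An independent matching of `H₀` covering `V₀⁺` is encoded as an injection `μ : V₀⁺ → V₀⁻`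
along `A₀`; as `N⁻` is free on the copies of `V`, its independence says that the `L'`-part of the
image is independent in `M`. -/
theorem counting_iff_indep_matching_H0_general {V E ι : Type*} [Fintype V] [Fintype E] [Fintype ι]
    (ends : E → Sym2 V) (root : ι → V) (M : FinMatroid ι) (k : ℕ) :
    (∀ F : Finset (E ⊕ ι),
      F.card ≤ k * (incVertsStar ends root F).card + M.rk (loopPart F)) ↔
    (∃ μ : E ⊕ ι → (Fin k × V) ⊕ ι,
      Function.Injective μ ∧
      (∀ x : E ⊕ ι, adjH0 ends root k x (μ x)) ∧
      M.Indep (Finset.univ.filter (fun r : ι => ∃ x, μ x = Sum.inr r))) := by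
  calc _ ↔ (M.freeSum (Fin k × V)).RadoCondition (nbhdH0 ends root k) := by
        simp only [FinMatroid.RadoCondition, freeSum_rk_biUnion_nbhdH0]
    _ ↔ ∃ μ, (M.freeSum (Fin k × V)).IsIndepTransversal (nbhdH0 ends root k) μ :=
        FinMatroid.radoCondition_iff_exists_isIndepTransversal
    _ ↔ _ := by
        simp only [FinMatroid.IsIndepTransversal, mem_nbhdH0, FinMatroid.freeSum_indep_iff]
        congr! with μ
        ext r
        simp

/-- **Lemma (Rado-type matching criterion for `g_{k,0}`).**
Let `(G, R)` satisfy (C1) and (C3) with respect to a matroid `M` of rank `k`, and form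
`G* = (V, E ∪ L)` and the bipartite graph `H₀` with the matroid `N⁻` on `V₀⁻` being the
direct sum of `M` on `L'` and the free matroid on the copies of `V`, and the free matroid
on `V₀⁺`.  Then `|F| ≤ g_{k,0}(F) = k|V(F)| + r_M(F ∩ L)` for every `F ⊆ E ∪ L` if and
only if `H₀` has an independent matching covering `V₀⁺`.  (An independent matching
covering `V₀⁺` is encoded as an injection `μ : V₀⁺ → V₀⁻` along the adjacency whose
endpoints in `V₀⁻` form an independent set of `N⁻`, i.e. whose `L'`-part is independent
in `M`.) -/
theorem counting_iff_indep_matching_H0 {V E ι : Type*} [Fintype V] [Fintype E] [Fintype ι]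
    (ends : E → Sym2 V) (root : ι → V) (M : FinMatroid ι) (k : ℕ)
    (hk : M.rk Finset.univ = k)
    (hC1 : CondC1 root M.rk) (hC3 : CondC3 V E ι k) :
    (∀ F : Finset (E ⊕ ι),
      F.card ≤ k * (incVertsStar ends root F).card + M.rk (loopPart F)) ↔
    (∃ μ : E ⊕ ι → (Fin k × V) ⊕ ι,
      Function.Injective μ ∧
      (∀ x : E ⊕ ι, adjH0 ends root k x (μ x)) ∧
      M.Indep (Finset.univ.filter (fun r : ι => ∃ x, μ x = Sum.inr r))) :=
  counting_iff_indep_matching_H0_general ends root M k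
end
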